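/- arXiv:2008.13302 — 4 statements merged into one kernel-verified Lean document; each statement's English description precedes it below -/
import Mathlib

section
/- For all integers k ≥ 1 and q ≥ 1, let v_i ∈ ℤ_{≥0}^k be the point whose i-th coordinate is 0 and all other coordinates equal q. Then for every vertex x of C_k(q) and every i, the graph distance in C_k(q) from x to v_i equals the i-th coordinate x_i. Consequently {v_1, ..., v_k} is a resolving set for C_k(q), so C_k(q) has metric dimension at most k. -/
open SimpleGraph

/-- `S` is a resolving set for `G`: any two distinct vertices are distinguished
by their graph distance to some landmark in `S`. -/
def IsResolvingSet {V : Type*} (G : SimpleGraph V) (S : Set V) : Prop :=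
  ∀ u v : V, u ≠ v → ∃ w ∈ S, G.dist u w ≠ G.dist v w

/-- The metric dimension of `G`: the least size of a (finite) resolving set. -/
noncomputable def metricDim {V : Type*} (G : SimpleGraph V) : ℕ :=
  sInf {k | ∃ S : Finset V, IsResolvingSet G ↑S ∧ S.card = k}

/-- Distance from an edge `e = {u,v}` to a vertex `w`: `min (d(u,w)) (d(v,w))`. -/
noncomputable def edgeDist {V : Type*} (G : SimpleGraph V) (e : Sym2 V) (w : V) : ℕ :=
  Sym2.lift ⟨fun u v => min (G.dist u w) (G.dist v w), fun u v => by simp [min_comm]⟩ e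

/-- `S` is an edge resolving set for `G`: any two distinct edges are distinguished
by their distance to some landmark in `S`. -/
def IsEdgeResolvingSet {V : Type*} (G : SimpleGraph V) (S : Set V) : Prop :=
  ∀ e ∈ G.edgeSet, ∀ f ∈ G.edgeSet, e ≠ f → ∃ w ∈ S, edgeDist G e w ≠ edgeDist G f w

/-- The edge metric dimension of `G`: the least size of a (finite) edge resolving set. -/
noncomputable def edgeMetricDim {V : Type*} (G : SimpleGraph V) : ℕ :=
  sInf {k | ∃ S : Finset V, IsEdgeResolvingSet G ↑S ∧ S.card = k}

/-- `G` contains `H` as a subgraph: there is an injective graph homomorphism `H → G`. -/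
def Contains {V W : Type*} (G : SimpleGraph V) (H : SimpleGraph W) : Prop :=
  ∃ f : H →g G, Function.Injective f

/-- The graph `D_k` on `ℤ_{≥0}^k`: distinct points are adjacent iff they differ
by at most 1 in every coordinate. -/
def Dgraph (k : ℕ) : SimpleGraph (Fin k → ℕ) where
  Adj x y := x ≠ y ∧ ∀ i, x i ≤ y i + 1 ∧ y i ≤ x i + 1
  symm := ⟨fun _x _y h => ⟨h.1.symm, fun i => ⟨(h.2 i).2, (h.2 i).1⟩⟩⟩
  loopless := ⟨fun _x h => h.1 rfl⟩

/-- Integer points of the `k`-dimensional cross-polytope centered at `(q,...,q)`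
with vertices at the points with one coordinate `0` or `2q` and the rest `q`. -/
def crossPolytopeSet (k q : ℕ) : Set (Fin k → ℕ) :=
  {x | (∑ i, |(x i : ℤ) - (q : ℤ)|) ≤ (q : ℤ)}

/-- `C_k(q)`: the induced subgraph of `D_k` on the cross-polytope points. -/
def Cgraph (k q : ℕ) : SimpleGraph (crossPolytopeSet k q) :=
  (Dgraph k).induce (crossPolytopeSet k q)

/-!
The point `v i` is `lowerVertex q i`. Every edge of `D_k` changes the `i`-th coordinate by at most
one, so `d(x, v i) ≥ x i`. Conversely, a king move from `x` towards `v i` decreases `x i` by one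
and stays in the cross-polytope: the `i`-th term of `∑ j, |x j - q|` grows by at most one, and
every other term shrinks by one unless it is already zero; when all of them are zero the sum is
`q - x i + 1 ≤ q`. Iterating gives a walk of length `x i`. The coordinates of `x` are thus its
distances to the `v i`, so `{v i}` is resolving.
-/

lemma Finset.sum_tsub_one_le {ι : Type*} [DecidableEq ι] (s : Finset ι) (f : ι → ℕ) :
    ∑ j ∈ s, (f j - 1) ≤ (∑ j ∈ s, f j) - 1 := by
  by_cases hpos : ∃ j ∈ s, 1 ≤ f j
  · obtain ⟨j, hj, hfj⟩ := hpos
    have hrest : ∑ l ∈ s.erase j, (f l - 1) ≤ ∑ l ∈ s.erase j, f l :=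
      Finset.sum_le_sum fun l _ => Nat.sub_le (f l) 1
    rw [← Finset.add_sum_erase s _ hj, ← Finset.add_sum_erase s f hj]
    omega
  · push Not at hpos
    rw [Finset.sum_eq_zero fun j hj => by have := hpos j hj; omega]
    exact Nat.zero_le _

lemma SimpleGraph.Walk.le_add_length {V : Type*} {G : SimpleGraph V} {f : V → ℕ}
    (hf : ∀ ⦃a b⦄, G.Adj a b → f a ≤ f b + 1) {a b : V} (w : G.Walk a b) :
    f a ≤ f b + w.length := by
  induction w with
  | nil => simp
  | cons hadj _ ih =>
    rw [Walk.length_cons]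
    have := hf hadj
    omega

lemma SimpleGraph.Reachable.le_add_dist {V : Type*} {G : SimpleGraph V} {f : V → ℕ}
    (hf : ∀ ⦃a b⦄, G.Adj a b → f a ≤ f b + 1) {a b : V} (h : G.Reachable a b) :
    f a ≤ f b + G.dist a b := by
  obtain ⟨w, hw⟩ := h.exists_walk_length_eq_dist
  exact hw ▸ w.le_add_length hf

lemma isResolvingSet_range_of_dist_eq {V ι : Type*} (G : SimpleGraph V) (v : ι → V)
    (c : V → ι → ℕ) (hc : Function.Injective c) (h : ∀ x i, G.dist x (v i) = c x i) :
    IsResolvingSet G (Set.range v) := by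
  intro a b hab
  obtain ⟨i, hi⟩ := Function.ne_iff.1 (hc.ne hab)
  exact ⟨v i, Set.mem_range_self i, by rwa [h, h]⟩

lemma metricDim_le_card_of_isResolvingSet_range {V ι : Type*} [Fintype ι] (G : SimpleGraph V)
    (v : ι → V) (h : IsResolvingSet G (Set.range v)) : metricDim G ≤ Fintype.card ι := by
  classical
  calc metricDim G ≤ (Finset.univ.image v).card :=
        Nat.sInf_le ⟨_, by rwa [Finset.coe_image, Finset.coe_univ, Set.image_univ], rfl⟩
    _ ≤ Fintype.card ι := Finset.card_image_le

def stepToward (t n : ℕ) : ℕ :=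
  if n < t then n + 1 else if t < n then n - 1 else n

section stepToward

variable (t n : ℕ)

lemma stepToward_le_succ : stepToward t n ≤ n + 1 := by
  unfold stepToward; split_ifs <;> omega

lemma le_stepToward_succ : n ≤ stepToward t n + 1 := by
  unfold stepToward; split_ifs <;> omega

lemma stepToward_zero_left : stepToward 0 n = n - 1 := by
  unfold stepToward; split_ifs <;> omega

lemma dist_stepToward : Nat.dist (stepToward t n) t = Nat.dist n t - 1 := by
  unfold stepToward Nat.dist; split_ifs <;> omega

variable {t n} in
lemma stepToward_ne (h : n ≠ t) : stepToward t n ≠ n := by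
  unfold stepToward; split_ifs <;> omega

end stepToward

lemma dgraph_adj_stepToward {k : ℕ} {t x : Fin k → ℕ} (h : x ≠ t) :
    (Dgraph k).Adj x (fun j => stepToward (t j) (x j)) := by
  obtain ⟨j, hj⟩ := Function.ne_iff.1 h
  refine ⟨fun hx => stepToward_ne hj (congrFun hx j).symm, fun l => ?_⟩
  exact ⟨le_stepToward_succ _ _, stepToward_le_succ _ _⟩

lemma mem_crossPolytopeSet_iff {k q : ℕ} {x : Fin k → ℕ} :
    x ∈ crossPolytopeSet k q ↔ ∑ j, Nat.dist (x j) q ≤ q := by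
  have hdist (a : ℕ) : |(a : ℤ) - q| = (Nat.dist a q : ℤ) := by
    unfold Nat.dist
    rcases le_total a q with h | h
    · rw [abs_of_nonpos (by omega)]; omega
    · rw [abs_of_nonneg (by omega)]; omega
  simp only [crossPolytopeSet, Set.mem_ofPred_eq, hdist, ← Nat.cast_sum, Nat.cast_le]

def lowerVertex {k : ℕ} (q : ℕ) (i : Fin k) : Fin k → ℕ :=
  fun j => if j = i then 0 else q

section crossPolytope

variable {k q : ℕ} {x : Fin k → ℕ} {i : Fin k}

@[simp]
lemma lowerVertex_self : lowerVertex q i i = 0 := if_pos rfl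

lemma lowerVertex_of_ne {j : Fin k} (h : j ≠ i) : lowerVertex q i j = q := if_neg h

lemma sum_dist_eq_add_sum_erase (y : Fin k → ℕ) (i : Fin k) :
    ∑ j, Nat.dist (y j) q = Nat.dist (y i) q + ∑ j ∈ Finset.univ.erase i, Nat.dist (y j) q :=
  (Finset.add_sum_erase _ _ (Finset.mem_univ i)).symm

lemma eq_lowerVertex_of_apply_eq_zero (hx : x ∈ crossPolytopeSet k q) (hxi : x i = 0) :
    x = lowerVertex q i := by
  rw [mem_crossPolytopeSet_iff, sum_dist_eq_add_sum_erase x i, hxi, Nat.dist_zero_left] at hx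
  have hrest : ∑ j ∈ Finset.univ.erase i, Nat.dist (x j) q = 0 := by omega
  funext j
  by_cases hj : j = i
  · rw [hj, hxi, lowerVertex_self]
  · rw [lowerVertex_of_ne hj]
    exact Nat.eq_of_dist_eq_zero
      ((Finset.sum_eq_zero_iff.1 hrest) j (Finset.mem_erase.2 ⟨hj, Finset.mem_univ j⟩))

lemma stepToward_lowerVertex_mem (hx : x ∈ crossPolytopeSet k q) (hxi : 1 ≤ x i) :
    (fun j => stepToward (lowerVertex q i j) (x j)) ∈ crossPolytopeSet k q := by
  have hrest : ∑ j ∈ Finset.univ.erase i, Nat.dist (stepToward (lowerVertex q i j) (x j)) q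
      = ∑ j ∈ Finset.univ.erase i, (Nat.dist (x j) q - 1) :=
    Finset.sum_congr rfl fun j hj => by
      rw [lowerVertex_of_ne (Finset.ne_of_mem_erase hj), dist_stepToward]
  have hle := Finset.sum_tsub_one_le (Finset.univ.erase i) fun j => Nat.dist (x j) q
  rw [mem_crossPolytopeSet_iff, sum_dist_eq_add_sum_erase x i] at hx
  rw [mem_crossPolytopeSet_iff, sum_dist_eq_add_sum_erase _ i, hrest, lowerVertex_self,
    stepToward_zero_left]
  unfold Nat.dist at hx hle ⊢
  omega

lemma exists_walk_lowerVertex (x t : crossPolytopeSet k q)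
    (ht : (t : Fin k → ℕ) = lowerVertex q i) :
    ∃ w : (Cgraph k q).Walk x t, w.length = (x : Fin k → ℕ) i := by
  induction hn : (x : Fin k → ℕ) i generalizing x with
  | zero =>
    obtain rfl : x = t := Subtype.ext ((eq_lowerVertex_of_apply_eq_zero x.2 hn).trans ht.symm)
    exact ⟨Walk.nil, rfl⟩
  | succ n ih =>
    let y : crossPolytopeSet k q :=
      ⟨_, stepToward_lowerVertex_mem (i := i) x.2 (by omega)⟩
    have hyi : (y : Fin k → ℕ) i = n := by
      simp [y, stepToward_zero_left, hn]
    have hne : (x : Fin k → ℕ) ≠ lowerVertex q i := fun h => by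
      rw [h, lowerVertex_self] at hn
      omega
    have hadj : (Cgraph k q).Adj x y := dgraph_adj_stepToward hne
    obtain ⟨w, hw⟩ := ih y hyi
    exact ⟨Walk.cons hadj w, by rw [Walk.length_cons, hw]⟩

lemma cgraph_dist_lowerVertex (x t : crossPolytopeSet k q)
    (ht : (t : Fin k → ℕ) = lowerVertex q i) :
    (Cgraph k q).dist x t = (x : Fin k → ℕ) i := by
  obtain ⟨w, hw⟩ := exists_walk_lowerVertex x t ht
  have hlower := Reachable.le_add_dist (f := fun y : crossPolytopeSet k q => (y : Fin k → ℕ) i)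
    (fun _ _ hadj => (hadj.2 i).1) ⟨w⟩
  rw [ht, lowerVertex_self, zero_add] at hlower
  exact le_antisymm (hw ▸ dist_le w) hlower

end crossPolytope

theorem statement1_general (k q : ℕ)
    (v : Fin k → ↥(crossPolytopeSet k q))
    (hv : ∀ i, (v i : Fin k → ℕ) = fun j => if j = i then 0 else q) :
    (∀ (x : ↥(crossPolytopeSet k q)) (i : Fin k),
      (Cgraph k q).dist x (v i) = (x : Fin k → ℕ) i) ∧
    IsResolvingSet (Cgraph k q) (Set.range v) ∧
    metricDim (Cgraph k q) ≤ k := by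
  have hdist : ∀ x i, (Cgraph k q).dist x (v i) = (x : Fin k → ℕ) i :=
    fun x i => cgraph_dist_lowerVertex x (v i) (hv i)
  have hres : IsResolvingSet (Cgraph k q) (Set.range v) :=
    isResolvingSet_range_of_dist_eq _ v _ Subtype.val_injective hdist
  exact ⟨hdist, hres, (metricDim_le_card_of_isResolvingSet_range _ v hres).trans_eq
    (Fintype.card_fin k)⟩

/-- in `C_k(q)`, with `v i` the point whose `i`-th coordinate is `0`
and all other coordinates `q`, the distance from any vertex `x` to `v i` is the
`i`-th coordinate of `x`; hence `{v 1, ..., v k}` is a resolving set and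
`C_k(q)` has metric dimension at most `k`. -/
theorem statement1 (k q : ℕ) (hk : 1 ≤ k) (hq : 1 ≤ q)
    (v : Fin k → ↥(crossPolytopeSet k q))
    (hv : ∀ i, (v i : Fin k → ℕ) = fun j => if j = i then 0 else q) :
    (∀ (x : ↥(crossPolytopeSet k q)) (i : Fin k),
      (Cgraph k q).dist x (v i) = (x : Fin k → ℕ) i) ∧
    IsResolvingSet (Cgraph k q) (Set.range v) ∧
    metricDim (Cgraph k q) ≤ k :=
  statement1_general k q v hv
end

section
/- Let k ≥ 1 be an integer and H a finite simple graph. There exists a finite connected graph of metric dimension at most k containing H as a subgraph if and only if D_k contains H as a subgraph. -/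
open SimpleGraph

/-!
A resolving set `w₁, …, wₘ` makes `v ↦ (d(v, wᵢ))ᵢ` injective, and along an edge each distance
changes by at most one, so this is an embedding into `D_m ⊆ D_k`. Conversely, a finite subgraph of
`D_k` lies in a cube `[0, n]^k` of the king's graph on `ℤ^k`. Below each facet `z_j = 0` glue the
pyramid `-n ≤ z_j < 0, -z_j ≤ z_i ≤ n`: in the resulting finite induced subgraph the distance from
`z` to the apex of the `j`-th pyramid is exactly `z_j + n`, so the `k` apexes resolve it.
-/

theorem Contains.trans {U V W : Type*} {G : SimpleGraph U} {H : SimpleGraph V}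
    {K : SimpleGraph W} (hGH : Contains G H) (hHK : Contains H K) : Contains G K := by
  obtain ⟨f, hf⟩ := hGH
  obtain ⟨g, hg⟩ := hHK
  exact ⟨f.comp g, hf.comp hg⟩

theorem Dgraph_contains_Dgraph {m k : ℕ} (h : m ≤ k) : Contains (Dgraph k) (Dgraph m) := by
  let pad : (Fin m → ℕ) → Fin k → ℕ := fun x i => if hi : (i : ℕ) < m then x ⟨i, hi⟩ else 0
  have pad_castLE : ∀ x i, pad x (Fin.castLE h i) = x i := fun x i => by simp [pad]
  have hinj : Function.Injective pad := fun x y hxy => funext fun i => by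
    rw [← pad_castLE x, ← pad_castLE y, hxy]
  refine ⟨⟨pad, fun {x y} hxy => ⟨hinj.ne hxy.1, fun i => ?_⟩⟩, hinj⟩
  by_cases hi : (i : ℕ) < m
  · simpa [pad, hi] using hxy.2 ⟨i, hi⟩
  · simp [pad, hi]

section Resolving

variable {V : Type*} {G : SimpleGraph V}

theorem isResolvingSet_univ (hG : G.Preconnected) : IsResolvingSet G Set.univ :=
  fun u v huv => ⟨u, trivial, by
    rw [dist_self]
    exact ((hG v u).pos_dist_of_ne huv.symm).ne⟩

theorem metricDim_le_card {S : Finset V} (hS : IsResolvingSet G S) : metricDim G ≤ S.card :=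
  Nat.sInf_le (s := {k | ∃ S : Finset V, IsResolvingSet G S ∧ S.card = k}) ⟨S, hS, rfl⟩

theorem exists_isResolvingSet_card_eq_metricDim [Fintype V] (hG : G.Preconnected) :
    ∃ S : Finset V, IsResolvingSet G S ∧ S.card = metricDim G :=
  Nat.sInf_mem (s := {k | ∃ S : Finset V, IsResolvingSet G S ∧ S.card = k})
    ⟨_, Finset.univ, by simpa using isResolvingSet_univ hG, rfl⟩

theorem Dgraph_contains_of_isResolvingSet {S : Finset V} (hS : IsResolvingSet G S) :
    Contains (Dgraph S.card) G := by
  let φ : V → Fin S.card → ℕ := fun v i => G.dist v (S.equivFin.symm i)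
  have hφ : Function.Injective φ := fun u v huv => by
    by_contra hne
    obtain ⟨w, hw, hd⟩ := hS u v hne
    have := congrFun huv (S.equivFin ⟨w, hw⟩)
    simp only [φ, Equiv.symm_apply_apply] at this
    exact hd this
  refine ⟨⟨φ, fun {u v} huv => ⟨hφ.ne huv.ne, fun i => ?_⟩⟩, hφ⟩
  have := huv.diff_dist_adj (u := (S.equivFin.symm i : V))
  simp only [φ, dist_comm (u := (S.equivFin.symm i : V))] at this ⊢
  omega

theorem Dgraph_contains_of_metricDim_le [Fintype V] (hG : G.Preconnected) {k : ℕ}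
    (h : metricDim G ≤ k) : Contains (Dgraph k) G := by
  obtain ⟨S, hS, hcard⟩ := exists_isResolvingSet_card_eq_metricDim hG
  exact (Dgraph_contains_Dgraph (hcard ▸ h)).trans (Dgraph_contains_of_isResolvingSet hS)

end Resolving

section Potential

variable {V : Type*} {G : SimpleGraph V} {φ : V → ℕ}

theorem le_add_length_of_adj_le (hφ : ∀ u v, G.Adj u v → φ u ≤ φ v + 1) {u v : V}
    (p : G.Walk u v) : φ u ≤ φ v + p.length := by
  induction p with
  | nil => simp
  | cons h _ ih =>
    rw [Walk.length_cons]
    linarith [hφ _ _ h]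

theorem exists_walk_length_eq_of_descent {a : V} (hzero : ∀ v, φ v = 0 → v = a)
    (hdesc : ∀ v, φ v ≠ 0 → ∃ u, G.Adj v u ∧ φ u + 1 = φ v) (v : V) :
    ∃ p : G.Walk v a, p.length = φ v := by
  induction hv : φ v generalizing v with
  | zero =>
    obtain rfl := hzero v hv
    exact ⟨.nil, rfl⟩
  | succ m ih =>
    obtain ⟨u, huv, hu⟩ := hdesc v (by omega)
    obtain ⟨p, hp⟩ := ih u (by omega)
    exact ⟨.cons huv p, by rw [Walk.length_cons, hp]⟩

theorem reachable_and_dist_eq_of_descent {a : V} (hφ : ∀ u v, G.Adj u v → φ u ≤ φ v + 1)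
    (hzero : ∀ v, φ v = 0 ↔ v = a)
    (hdesc : ∀ v, φ v ≠ 0 → ∃ u, G.Adj v u ∧ φ u + 1 = φ v) (v : V) :
    G.Reachable v a ∧ G.dist v a = φ v := by
  obtain ⟨p, hp⟩ := exists_walk_length_eq_of_descent (fun v => (hzero v).1) hdesc v
  refine ⟨⟨p⟩, le_antisymm (hp ▸ dist_le p) ?_⟩
  obtain ⟨q, hq⟩ := Reachable.exists_walk_length_eq_dist ⟨p⟩
  simpa [(hzero a).2 rfl, hq] using le_add_length_of_adj_le hφ q

end Potential

def kingGraph (k : ℕ) : SimpleGraph (Fin k → ℤ) where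
  Adj x y := x ≠ y ∧ ∀ i, |x i - y i| ≤ 1
  symm := ⟨fun x y h => ⟨h.1.symm, fun i => abs_sub_comm (x i) (y i) ▸ h.2 i⟩⟩
  loopless := ⟨fun _ h => h.1 rfl⟩

/-- The cube `[0, n]^k` together with, below each facet `z j = 0`, the pyramid
`-n ≤ z j < 0`, `-z j ≤ z i ≤ n` for `i ≠ j`. -/
def pyramidRegion (k n : ℕ) : Set (Fin k → ℤ) :=
  {z | (∀ i, -(n : ℤ) ≤ z i ∧ z i ≤ n) ∧ ∀ i j, i ≠ j → 0 ≤ z i + z j}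

abbrev pyramidGraph (k n : ℕ) : SimpleGraph (pyramidRegion k n) :=
  (kingGraph k).induce (pyramidRegion k n)

def apex {k : ℕ} (n : ℕ) (j : Fin k) : pyramidRegion k n :=
  ⟨fun i => if i = j then -n else n, fun i => by dsimp only; split_ifs <;> omega, fun i l hil => by
    dsimp only
    split_ifs with hi hl
    · exact absurd (hi.trans hl.symm) hil
    all_goals omega⟩

section Pyramid

variable {k n : ℕ}

instance : Finite (pyramidRegion k n) :=
  ((Set.finite_Icc (fun _ => -(n : ℤ)) fun _ => n).subset
    fun _ hz => ⟨fun i => (hz.1 i).1, fun i => (hz.1 i).2⟩).to_subtype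

theorem eq_apex_of_apply_eq {z : pyramidRegion k n} {j : Fin k} (hz : z.1 j = -n) :
    z = apex n j := by
  obtain ⟨z, hbound, hsum⟩ := z
  refine Subtype.ext (funext fun i => ?_)
  simp only [apex]
  dsimp only at hz
  split_ifs with hij
  · exact hij ▸ hz
  · linarith [hsum i j hij, (hbound i).2]

theorem exists_adj_apply_eq_sub_one {z : pyramidRegion k n} {j : Fin k} (hz : -(n : ℤ) < z.1 j) :
    ∃ z' : pyramidRegion k n, (pyramidGraph k n).Adj z z' ∧ z'.1 j = z.1 j - 1 := by
  obtain ⟨z, hbound, hsum⟩ := z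
  dsimp only at hz
  -- Raising the other coordinates (capped at `n`) keeps `z i + z j ≥ 0` after lowering `z j`.
  let z' : Fin k → ℤ := fun i => if i = j then z j - 1 else min (z i + 1) n
  have hz' : z' ∈ pyramidRegion k n := by
    refine ⟨fun i => ?_, fun i l hil => ?_⟩
    · have := hbound i
      have := hbound j
      simp only [z']
      split_ifs <;> omega
    · have := hsum i l hil
      have := (hbound i).2
      have := (hbound l).2
      rcases eq_or_ne i j with rfl | hi
      · simp only [z', if_pos, if_neg hil.symm]
        omega
      rcases eq_or_ne l j with rfl | hl
      · simp only [z', if_pos, if_neg hi]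
        omega
      · simp only [z', if_neg hi, if_neg hl]
        omega
  refine ⟨⟨z', hz'⟩, ⟨fun h => ?_, fun i => ?_⟩, by simp [z']⟩
  · have hj : z j = z' j := congrFun h j
    simp only [z', if_pos] at hj
    omega
  · have := (hbound i).2
    show |z i - z' i| ≤ 1
    rcases eq_or_ne i j with rfl | hi
    · simp only [z', if_pos, abs_le]
      omega
    · simp only [z', if_neg hi, abs_le]
      omega

theorem reachable_apex_and_dist_eq (z : pyramidRegion k n) (j : Fin k) :
    (pyramidGraph k n).Reachable z (apex n j) ∧
      ((pyramidGraph k n).dist z (apex n j) : ℤ) = z.1 j + n := by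
  have hlow : ∀ z : pyramidRegion k n, -(n : ℤ) ≤ z.1 j := fun z => (z.2.1 j).1
  obtain ⟨hreach, hdist⟩ := reachable_and_dist_eq_of_descent (G := pyramidGraph k n) (a := apex n j)
    (φ := fun z => (z.1 j + n).toNat)
    (fun u v huv => by have : |u.1 j - v.1 j| ≤ 1 := huv.2 j; rw [abs_le] at this; omega)
    (fun v => ⟨fun hv => eq_apex_of_apply_eq (by have := hlow v; omega),
      fun hv => by simp [hv, apex]⟩)
    (fun v hv => by
      obtain ⟨u, hvu, hu⟩ := exists_adj_apply_eq_sub_one (z := v) (j := j) (by omega)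
      exact ⟨u, hvu, by omega⟩) z
  exact ⟨hreach, by have := hlow z; omega⟩

theorem pyramidGraph_connected (hk : 0 < k) : (pyramidGraph k n).Connected :=
  (connected_iff _).2 ⟨fun u v => (reachable_apex_and_dist_eq u ⟨0, hk⟩).1.trans
    (reachable_apex_and_dist_eq v ⟨0, hk⟩).1.symm, ⟨apex n ⟨0, hk⟩⟩⟩

theorem isResolvingSet_range_apex : IsResolvingSet (pyramidGraph k n) (Set.range (apex n)) := by
  intro u v huv
  obtain ⟨j, hj⟩ : ∃ j, u.1 j ≠ v.1 j := by
    by_contra! h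
    exact huv (Subtype.ext (funext h))
  refine ⟨apex n j, ⟨j, rfl⟩, fun h => hj ?_⟩
  have := congrArg (Nat.cast : ℕ → ℤ) h
  rw [(reachable_apex_and_dist_eq u j).2, (reachable_apex_and_dist_eq v j).2] at this
  omega

theorem metricDim_pyramidGraph_le : metricDim (pyramidGraph k n) ≤ k := by
  classical
  calc metricDim (pyramidGraph k n) ≤ (Finset.univ.image (apex n)).card :=
        metricDim_le_card (by simpa using isResolvingSet_range_apex)
    _ ≤ k := by simpa using Finset.card_image_le (s := Finset.univ) (f := apex (k := k) n)

theorem pyramidGraph_contains_of_le {W : Type*} {H : SimpleGraph W} (f : H →g Dgraph k)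
    (hf : Function.Injective f) (hn : ∀ w i, f w i ≤ n) : Contains (pyramidGraph k n) H := by
  let g : W → pyramidRegion k n := fun w => ⟨fun i => f w i, fun i => by
    have := hn w i
    dsimp only
    omega, fun i l _ => by dsimp only; omega⟩
  have hg : Function.Injective g := fun u v huv =>
    hf (funext fun i => by simpa [g] using congrFun (congrArg Subtype.val huv) i)
  refine ⟨⟨g, fun {u v} huv => ⟨fun h => hg.ne huv.ne (Subtype.ext h), fun i => ?_⟩⟩, hg⟩
  have := (f.map_adj huv).2 i
  show |(f u i : ℤ) - f v i| ≤ 1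
  rw [abs_le]
  omega

end Pyramid

/-- there is a finite connected graph of metric dimension at most `k`
containing `H` as a subgraph iff `D_k` contains `H` as a subgraph. -/
theorem statement2 (k : ℕ) (hk : 1 ≤ k) {W : Type} [Fintype W] (H : SimpleGraph W) :
    (∃ (V : Type) (_ : Fintype V) (G : SimpleGraph V),
      G.Connected ∧ metricDim G ≤ k ∧ Contains G H) ↔ Contains (Dgraph k) H := by
  constructor
  · rintro ⟨V, _, G, hG, hdim, hGH⟩
    exact (Dgraph_contains_of_metricDim_le hG.preconnected hdim).trans hGH
  · rintro ⟨f, hf⟩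
    obtain ⟨n, hn⟩ := (Set.finite_range fun p : W × Fin k => f p.1 p.2).bddAbove
    exact ⟨pyramidRegion k n, Fintype.ofFinite _, pyramidGraph k n, pyramidGraph_connected hk,
      metricDim_pyramidGraph_le, pyramidGraph_contains_of_le f hf fun w i => hn ⟨(w, i), rfl⟩⟩
end

section
/- For every integer k ≥ 1, every finite connected graph with at least two vertices and metric dimension at most k has a vertex of degree at most 3^{k−1}; in fact, for any resolving set of size k, each landmark (element of the resolving set) has degree at most 3^{k−1}. In particular, the minimum degree of such a graph is at most 3^{k−1}. -/
open SimpleGraph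

/-!
A neighbour `u` of `w` satisfies `|d(u,t) - d(w,t)| ≤ 1` for every vertex `t`, and `d(u,w) = 1`.
So the distance vector of `u` to a resolving set `S ∋ w` is determined by the vector of
differences `d(u,t) - d(w,t) ∈ {-1, 0, 1}` over the other landmarks `t ∈ S \ {w}`, and distinct
neighbours of `w` have distinct such vectors. Hence `deg w ≤ 3 ^ (|S| - 1)`.
-/

open Finset

namespace SimpleGraph

variable {V : Type*} {G : SimpleGraph V}

lemma Adj.dist_le_dist_add_one {u v : V} (h : G.Adj u v) (t : V) :
    G.dist u t ≤ G.dist v t + 1 := by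
  rw [G.dist_comm, G.dist_comm (u := v)]
  rcases h.symm.diff_dist_adj (u := t) with h | h | h <;> omega

noncomputable def neighborDistShift (G : SimpleGraph V) (w : V) (T : Finset V)
    (u : G.neighborSet w) : T → Fin 3 := fun t =>
  ⟨G.dist u t + 1 - G.dist w t, by
    have := (show G.Adj u w from u.2.symm).dist_le_dist_add_one t
    omega⟩

lemma neighborDistShift_injective [DecidableEq V] {S : Finset V}
    (hS : IsResolvingSet G ↑S) (w : V) : (neighborDistShift G w (S.erase w)).Injective := by
  intro u v huv
  by_contra hne
  obtain ⟨t, htS, ht⟩ := hS u v (Subtype.coe_ne_coe.2 hne)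
  have hadj_u : G.Adj w u := u.2
  have hadj_v : G.Adj w v := v.2
  have htw : t ≠ w := by
    rintro rfl
    exact ht ((dist_eq_one_iff_adj.2 hadj_u.symm).trans (dist_eq_one_iff_adj.2 hadj_v.symm).symm)
  have hshift := congrArg Fin.val (congrFun huv ⟨t, mem_erase.2 ⟨htw, htS⟩⟩)
  have hu := hadj_u.dist_le_dist_add_one t
  have hv := hadj_v.dist_le_dist_add_one t
  simp only [neighborDistShift] at hshift
  omega

theorem ncard_neighborSet_le_three_pow [DecidableEq V] {S : Finset V}
    (hS : IsResolvingSet G ↑S) (w : V) : (G.neighborSet w).ncard ≤ 3 ^ #(S.erase w) := by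
  calc (G.neighborSet w).ncard = Nat.card (G.neighborSet w) := (Nat.card_coe_set_eq _).symm
    _ ≤ Nat.card (S.erase w → Fin 3) :=
        Nat.card_le_card_of_injective _ (neighborDistShift_injective hS w)
    _ = 3 ^ #(S.erase w) := by rw [Nat.card_fun, Nat.card_eq_finsetCard, Nat.card_fin]

theorem ncard_neighborSet_landmark_le {S : Finset V} (hS : IsResolvingSet G ↑S) {w : V}
    (hw : w ∈ S) : (G.neighborSet w).ncard ≤ 3 ^ (#S - 1) := by
  classical
  simpa [card_erase_of_mem hw] using ncard_neighborSet_le_three_pow hS w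

lemma IsResolvingSet.nonempty {S : Set V} (hS : IsResolvingSet G S) {u v : V} (huv : u ≠ v) :
    S.Nonempty :=
  let ⟨w, hw, _⟩ := hS u v huv
  ⟨w, hw⟩

lemma Connected.isResolvingSet_univ (hG : G.Connected) : IsResolvingSet G Set.univ :=
  fun u v huv =>
    ⟨u, trivial, by rw [G.dist_self]; exact (hG.pos_dist_of_ne huv.symm).ne⟩

lemma Connected.exists_isResolvingSet_card_eq_metricDim [Fintype V] (hG : G.Connected) :
    ∃ S : Finset V, IsResolvingSet G ↑S ∧ #S = metricDim G := by
  have hne : {k | ∃ S : Finset V, IsResolvingSet G ↑S ∧ #S = k}.Nonempty :=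
    ⟨_, univ, by simpa using hG.isResolvingSet_univ, rfl⟩
  exact Nat.sInf_mem hne

end SimpleGraph

theorem statement10_general (k : ℕ) {V : Type*} [Fintype V] (G : SimpleGraph V)
    (hG : G.Connected) (hcard : 2 ≤ Fintype.card V) :
    (metricDim G ≤ k → ∃ v : V, (G.neighborSet v).ncard ≤ 3 ^ (k - 1)) ∧
    (∀ S : Finset V, IsResolvingSet G ↑S → S.card = k →
      ∀ w ∈ S, (G.neighborSet w).ncard ≤ 3 ^ (k - 1)) := by
  refine ⟨fun hdim => ?_, fun S hS hSk w hw => hSk ▸ ncard_neighborSet_landmark_le hS hw⟩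
  obtain ⟨S, hS, hSdim⟩ := hG.exists_isResolvingSet_card_eq_metricDim
  obtain ⟨u, v, huv⟩ := Fintype.exists_pair_of_one_lt_card hcard
  obtain ⟨w, hw⟩ := hS.nonempty huv
  exact ⟨w, (ncard_neighborSet_landmark_le hS hw).trans
    (Nat.pow_le_pow_right (by norm_num) (by omega))⟩

/-- a finite connected graph on at least two vertices of metric
dimension at most `k` has a vertex of degree at most `3^(k-1)`; in fact every
landmark of any resolving set of size `k` has degree at most `3^(k-1)`. -/
theorem statement10 (k : ℕ) (hk : 1 ≤ k) {V : Type*} [Fintype V] (G : SimpleGraph V)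
    (hG : G.Connected) (hcard : 2 ≤ Fintype.card V) :
    (metricDim G ≤ k → ∃ v : V, (G.neighborSet v).ncard ≤ 3 ^ (k - 1)) ∧
    (∀ S : Finset V, IsResolvingSet G ↑S → S.card = k →
      ∀ w ∈ S, (G.neighborSet w).ncard ≤ 3 ^ (k - 1)) :=
  statement10_general k G hG hcard
end

section
/- There exist constants c_1, c_2 > 0 and an integer K such that for every integer k ≥ K: every finite connected graph of edge metric dimension at most k has clique number at most 2^{c_2 k}, and there exists a finite connected graph of edge metric dimension at most k whose clique number is at least 2^{c_1 k}. That is, the maximum possible clique number of a graph of edge metric dimension at most k is 2^{Θ(k)}. -/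
open SimpleGraph

/-!
Inside a clique, the distances from the edges to any vertex `w` take only two consecutive values, so
an edge resolving set `S` already separates the `n.choose 2` edges of a clique `K_n` by parities:
`n.choose 2 ≤ 2 ^ |S|`, whence `n ≤ 2 ^ |S|`.

Conversely, take `k` subsets of `[n]` such that every unordered pair `{x, y}` is determined by
which of the subsets it meets; by a union bound, random subsets do this already for
`n = 2 ^ (k / 30)`. Adding to the clique `K_n` two landmark vertices per subset, joined to the
elements of the subset, gives a connected graph in which the `2k` landmarks resolve all edges.
-/

open Finset

namespace SimpleGraph

variable {V : Type*} {G : SimpleGraph V}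

@[simp] lemma edgeDist_mk (G : SimpleGraph V) (u v w : V) :
    edgeDist G s(u, v) w = min (G.dist u w) (G.dist v w) := rfl

lemma Connected.edgeDist_eq_zero_iff (hG : G.Connected) {e : Sym2 V} {w : V} :
    edgeDist G e w = 0 ↔ w ∈ e := by
  induction e using Sym2.ind with
  | _ u v =>
    rw [edgeDist_mk, Nat.min_eq_zero_iff, hG.dist_eq_zero_iff, hG.dist_eq_zero_iff, Sym2.mem_iff,
      eq_comm, @eq_comm _ v]

lemma Connected.edgeDist_ne_of_mem_of_notMem (hG : G.Connected) {e f : Sym2 V} {w : V}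
    (he : w ∈ e) (hf : w ∉ f) : edgeDist G e w ≠ edgeDist G f w := by
  rw [hG.edgeDist_eq_zero_iff.2 he]
  exact fun h => hf (hG.edgeDist_eq_zero_iff.1 h.symm)

lemma Connected.isEdgeResolvingSet_univ (hG : G.Connected) : IsEdgeResolvingSet G Set.univ := by
  intro e _ f _ hef
  obtain ⟨w, hw⟩ : ∃ w, ¬(w ∈ e ↔ w ∈ f) := by
    by_contra! h
    exact hef (Sym2.ext h)
  refine ⟨w, trivial, ?_⟩
  by_cases hwe : w ∈ e
  · exact hG.edgeDist_ne_of_mem_of_notMem hwe (by tauto)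
  · exact (hG.edgeDist_ne_of_mem_of_notMem (by tauto) hwe).symm

lemma edgeMetricDim_le_card {S : Finset V} (hS : IsEdgeResolvingSet G S) :
    edgeMetricDim G ≤ #S :=
  Nat.sInf_le ⟨S, hS, rfl⟩

lemma Connected.exists_isEdgeResolvingSet_card_eq [Fintype V] (hG : G.Connected) :
    ∃ S : Finset V, IsEdgeResolvingSet G S ∧ #S = edgeMetricDim G :=
  Nat.sInf_mem (s := {k | ∃ S : Finset V, IsEdgeResolvingSet G ↑S ∧ #S = k})
    ⟨_, univ, by simpa using hG.isEdgeResolvingSet_univ, rfl⟩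

lemma Connected.edgeDist_le_edgeDist_add_one (hG : G.Connected) {e f : Sym2 V}
    (hef : ∀ x ∈ e, ∀ y ∈ f, G.dist x y ≤ 1) (w : V) :
    edgeDist G e w ≤ edgeDist G f w + 1 := by
  induction e using Sym2.ind with | _ a b => ?_
  induction f using Sym2.ind with | _ c d => ?_
  have hac := hef a (Sym2.mem_mk_left a b) c (Sym2.mem_mk_left c d)
  have had := hef a (Sym2.mem_mk_left a b) d (Sym2.mem_mk_right c d)
  have hacw := hG.dist_triangle (u := a) (v := c) (w := w)
  have hadw := hG.dist_triangle (u := a) (v := d) (w := w)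
  simp only [edgeDist_mk]
  omega

/-- The edges of a clique are told apart by the parities of their distances to the vertices of `S`,
since for each `w` these distances take two consecutive values. -/
lemma Connected.choose_two_le_two_pow_card {W : Type*} [Fintype W] (hG : G.Connected)
    {S : Finset V} (hS : IsEdgeResolvingSet G S) (f : (⊤ : SimpleGraph W) →g G)
    (hf : Function.Injective f) : (Fintype.card W).choose 2 ≤ 2 ^ #S := by
  classical
  have hclose : ∀ (p q : Sym2 W) (w : V),
      edgeDist G (p.map f) w ≤ edgeDist G (q.map f) w + 1 := by
    intro p q w
    refine hG.edgeDist_le_edgeDist_add_one ?_ w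
    simp only [Sym2.mem_map]
    rintro _ ⟨i, -, rfl⟩ _ ⟨j, -, rfl⟩
    obtain rfl | hij := eq_or_ne i j
    · simp
    · exact (dist_eq_one_iff_adj.2 (f.map_adj hij)).le
  let code : Sym2 W → S → ZMod 2 := fun p w => (edgeDist G (p.map f) w : ZMod 2)
  have hinj : Set.InjOn code (⊤ : SimpleGraph W).edgeFinset := by
    intro p hp q hq hpq
    by_contra hne
    rw [coe_edgeFinset] at hp hq
    obtain ⟨w, hwS, hw⟩ := hS _ (f.map_mem_edgeSet hp) _ (f.map_mem_edgeSet hq)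
      ((Sym2.map.injective hf).ne hne)
    have hpar : edgeDist G (p.map f) w % 2 = edgeDist G (q.map f) w % 2 :=
      (ZMod.natCast_eq_natCast_iff' _ _ 2).1 (congrFun hpq ⟨w, hwS⟩)
    have hpq := hclose p q w
    have hqp := hclose q p w
    omega
  calc (Fintype.card W).choose 2 = #(⊤ : SimpleGraph W).edgeFinset :=
        card_edgeFinset_top_eq_card_choose_two.symm
    _ ≤ #(univ : Finset (S → ZMod 2)) :=
        card_le_card_of_injOn code (fun _ _ => mem_coe.2 (mem_univ _)) hinj
    _ = 2 ^ #S := by simp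

end SimpleGraph

lemma Nat.le_of_choose_two_le {n m : ℕ} (h : n.choose 2 ≤ m) (hm : 2 ≤ m) : n ≤ m := by
  by_contra! hmn
  have hm1 : m + 1 ≤ (m + 1).choose 2 := by
    rw [Nat.choose_two_right, Nat.add_sub_cancel, Nat.le_div_iff_mul_le two_pos]
    exact Nat.mul_le_mul_left _ hm
  have := Nat.choose_le_choose (a := m + 1) 2 hmn
  omega

section SeparatesPairs

variable {α ι : Type*}

def SeparatesPairs (F : ι → Finset α) : Prop :=
  ∀ e e' : Sym2 α, ¬e.IsDiag → ¬e'.IsDiag → e ≠ e' →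
    ∃ i, ¬((∃ x ∈ e, x ∈ F i) ↔ ∃ x ∈ e', x ∈ F i)

lemma SeparatesPairs.exists_not_mem_iff_mem [Fintype α] {F : ι → Finset α} (hF : SeparatesPairs F)
    (hα : 3 ≤ Fintype.card α) {x y : α} (hxy : x ≠ y) : ∃ i, ¬(x ∈ F i ↔ y ∈ F i) := by
  classical
  obtain ⟨z, -, hz⟩ := exists_mem_notMem_of_card_lt_card (s := {x, y}) (t := univ)
    (by simpa using card_le_two.trans_lt hα)
  simp only [mem_insert, mem_singleton, not_or] at hz
  obtain ⟨i, hi⟩ := hF s(x, z) s(y, z) (by simpa using Ne.symm hz.1)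
    (by simpa using Ne.symm hz.2) (by rw [Ne, Sym2.congr_left]; exact hxy)
  refine ⟨i, fun hxyi => hi ?_⟩
  simp only [Sym2.mem_iff, exists_eq_or_imp, exists_eq_left]
  tauto

lemma SeparatesPairs.exists_forall_nonempty [Fintype α] [Nonempty α] {F : ι → Finset α}
    (hF : SeparatesPairs F) : ∃ F' : ι → Finset α, SeparatesPairs F' ∧ ∀ i, (F' i).Nonempty := by
  classical
  refine ⟨fun i => if F i = ∅ then univ else F i, fun e e' he he' hee' => ?_, fun i => ?_⟩
  · obtain ⟨i, hi⟩ := hF e e' he he' hee'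
    have hFi : F i ≠ ∅ := by rintro hFi; simp [hFi] at hi
    exact ⟨i, by simpa [hFi] using hi⟩
  · dsimp only
    split_ifs with hFi
    · exact univ_nonempty
    · exact nonempty_iff_ne_empty.2 hFi

variable [Fintype α]

open Classical in
lemma card_filter_meets_iff_le (hα : 3 ≤ Fintype.card α) {e e' : Sym2 α} (he : ¬e.IsDiag)
    (hee' : e ≠ e') :
    #{N : Finset α | (∃ x ∈ e, x ∈ N) ↔ ∃ x ∈ e', x ∈ N} ≤ 7 * 2 ^ (Fintype.card α - 3) := by
  obtain ⟨p, hpe, hpe'⟩ : ∃ p ∈ e, p ∉ e' := by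
    by_contra! h
    induction e using Sym2.ind with
    | _ x y => exact hee' ((Sym2.mem_and_mem_iff (by simpa using he)).1
        ⟨h x (Sym2.mem_mk_left x y), h y (Sym2.mem_mk_right x y)⟩).symm
  induction e' using Sym2.ind with | _ a b => ?_
  simp only [Sym2.mem_iff, not_or] at hpe'
  -- every `N` with `p ∈ N` and `a, b ∉ N` meets `e` but not `e'`
  set T : Finset α := univ \ {a, b}
  have hdisj : ({N : Finset α | (∃ x ∈ e, x ∈ N) ↔ ∃ x ∈ s(a, b), x ∈ N} : Finset (Finset α)) ⊆
      univ \ Icc {p} T := by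
    intro N hN
    simp only [mem_filter, mem_univ, true_and] at hN
    simp only [mem_sdiff, mem_univ, true_and, mem_Icc, singleton_subset_iff]
    rintro ⟨hpN, hNT⟩
    obtain ⟨x, hx, hxN⟩ := hN.1 ⟨p, hpe, hpN⟩
    have := hNT hxN
    simp_all [T]
  have hT : Fintype.card α - 2 ≤ #T := by
    have := card_le_two (a := a) (b := b)
    rw [card_univ_sdiff]
    omega
  have hIcc : 2 ^ (Fintype.card α - 3) ≤ #(Icc {p} T) := by
    rw [card_Icc_finset (by simpa [T] using hpe'), card_singleton]
    exact Nat.pow_le_pow_right two_pos (by omega)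
  have hcard : 2 ^ Fintype.card α = 8 * 2 ^ (Fintype.card α - 3) := by
    rw [← pow_sub_mul_pow 2 hα]
    ring
  have := card_le_card hdisj
  rw [card_univ_sdiff, Fintype.card_finset] at this
  omega

/-- Union bound over the pairs of pairs `e ≠ e'`: there are at most `|α| ^ 4` of them, and for each
the sets not distinguishing them are at most a `7 / 8` fraction of all subsets of `α`. -/
lemma exists_separatesPairs (hα : 3 ≤ Fintype.card α) {k : ℕ}
    (hk : Fintype.card α ^ 4 * 7 ^ k < 8 ^ k) : ∃ F : Fin k → Finset α, SeparatesPairs F := by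
  classical
  by_contra! hbad
  set n := Fintype.card α
  let Q : Finset (Sym2 α × Sym2 α) := {q | ¬q.1.IsDiag ∧ q.1 ≠ q.2}
  let bad : Sym2 α × Sym2 α → Finset (Fin k → Finset α) := fun q =>
    Fintype.piFinset fun _ => {N | (∃ x ∈ q.1, x ∈ N) ↔ ∃ x ∈ q.2, x ∈ N}
  have hcover : (univ : Finset (Fin k → Finset α)) ⊆ Q.biUnion bad := by
    intro F _
    obtain ⟨e, e', he, -, hee', hF⟩ : ∃ e e' : Sym2 α, ¬e.IsDiag ∧ ¬e'.IsDiag ∧ e ≠ e' ∧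
        ∀ i, (∃ x ∈ e, x ∈ F i) ↔ ∃ x ∈ e', x ∈ F i := by
      simpa [SeparatesPairs] using hbad F
    exact mem_biUnion.2 ⟨(e, e'), by simp [Q, he, hee'], by simpa [bad] using hF⟩
  have hQ : #Q ≤ n ^ 4 := by
    have hsym : Fintype.card (Sym2 α) ≤ n * n := by
      simpa using Fintype.card_le_of_surjective _ (Sym2.mk_surjective (α := α))
    calc #Q ≤ Fintype.card (Sym2 α × Sym2 α) := card_le_univ Q
      _ ≤ (n * n) * (n * n) := by rw [Fintype.card_prod]; exact Nat.mul_le_mul hsym hsym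
      _ = n ^ 4 := by ring
  have hbadcard : ∀ q ∈ Q, #(bad q) ≤ (7 * 2 ^ (n - 3)) ^ k := by
    intro q hq
    simp only [Q, mem_filter, mem_univ, true_and] at hq
    rw [Fintype.card_piFinset, prod_const, card_univ, Fintype.card_fin]
    exact Nat.pow_le_pow_left (card_filter_meets_iff_le hα hq.1 hq.2) k
  have hcount : (2 ^ n) ^ k ≤ n ^ 4 * (7 * 2 ^ (n - 3)) ^ k := by
    calc (2 ^ n) ^ k = #(univ : Finset (Fin k → Finset α)) := by simp [n]
      _ ≤ #(Q.biUnion bad) := card_le_card hcover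
      _ ≤ ∑ q ∈ Q, #(bad q) := card_biUnion_le
      _ ≤ #Q * (7 * 2 ^ (n - 3)) ^ k := sum_le_card_nsmul _ _ _ hbadcard
      _ ≤ n ^ 4 * (7 * 2 ^ (n - 3)) ^ k := Nat.mul_le_mul_right _ hQ
  have h8 : 2 ^ n = 8 * 2 ^ (n - 3) := by
    rw [← pow_sub_mul_pow 2 hα]
    ring
  rw [h8, mul_pow, mul_pow, ← mul_assoc] at hcount
  exact (Nat.mul_lt_mul_of_pos_right hk (by positivity)).not_ge hcount

end SeparatesPairs

namespace SimpleGraph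

variable {α ι : Type*}

/-- Each set `F i` gets two landmarks `(i, false)` and `(i, true)`, so that edges `x (i, b)` and
`x' (i, b)` at the same landmark are resolved by `(i, !b)` when `F i` separates `x` from `x'`. -/
def landmarkGraph (F : ι → Finset α) : SimpleGraph (α ⊕ ι × Bool) where
  Adj u v :=
    match u, v with
    | .inl x, .inl y => x ≠ y
    | .inl x, .inr l => x ∈ F l.1
    | .inr l, .inl x => x ∈ F l.1
    | .inr _, .inr _ => False
  symm := ⟨by
    rintro (x | l) (y | l') h
    exacts [Ne.symm h, h, h, h]⟩
  loopless := ⟨by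
    rintro (x | l) h
    exacts [h rfl, h]⟩

variable (F : ι → Finset α)

@[simp] lemma landmarkGraph_not_adj_inr_inr {l l' : ι × Bool} :
    ¬(landmarkGraph F).Adj (.inr l) (.inr l') := id

lemma landmarkGraph_contains_top : Contains (landmarkGraph F) (⊤ : SimpleGraph α) :=
  ⟨⟨Sum.inl, id⟩, Sum.inl_injective⟩

lemma landmarkGraph_edge_cases {e : Sym2 (α ⊕ ι × Bool)} (he : e ∈ (landmarkGraph F).edgeSet) :
    (∃ x y, x ≠ y ∧ e = s(.inl x, .inl y)) ∨ ∃ x l, e = s(.inl x, .inr l) := by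
  induction e using Sym2.ind with
  | _ u v =>
    rcases u with x | l <;> rcases v with y | l'
    · exact .inl ⟨x, y, he, rfl⟩
    · exact .inr ⟨x, l', rfl⟩
    · exact .inr ⟨y, l, Sym2.eq_swap⟩
    · exact absurd he (landmarkGraph_not_adj_inr_inr F (l := l) (l' := l'))

variable {F} [Nonempty α] (hF : ∀ i, (F i).Nonempty)
include hF

lemma landmarkGraph_connected : (landmarkGraph F).Connected := by
  obtain ⟨x₀⟩ := ‹Nonempty α›
  have hinl : ∀ x, (landmarkGraph F).Reachable (.inl x₀) (.inl x) := fun x => by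
    obtain rfl | h := eq_or_ne x₀ x
    exacts [.refl _, Adj.reachable h]
  refine (connected_iff_exists_forall_reachable _).2 ⟨.inl x₀, ?_⟩
  rintro (x | l)
  · exact hinl x
  · obtain ⟨x, hx⟩ := hF l.1
    exact (hinl x).trans (Adj.reachable hx)

lemma landmarkGraph_dist_inl_inr [DecidableEq α] (x : α) (l : ι × Bool) :
    (landmarkGraph F).dist (.inl x) (.inr l) = if x ∈ F l.1 then 1 else 2 := by
  split_ifs with hx
  · exact dist_eq_one_iff_adj.2 hx
  obtain ⟨y, hy⟩ := hF l.1
  have hxy : x ≠ y := by rintro rfl; exact hx hy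
  refine le_antisymm ?_ ((landmarkGraph_connected hF).one_lt_dist_of_ne_of_not_adj
    Sum.inl_ne_inr hx)
  exact dist_le (.cons (show (landmarkGraph F).Adj (.inl x) (.inl y) from hxy)
    (.cons (show (landmarkGraph F).Adj (.inl y) (.inr l) from hy) .nil))

lemma landmarkGraph_edgeDist_inl_inl [DecidableEq α] (x y : α) (l : ι × Bool) :
    edgeDist (landmarkGraph F) s(.inl x, .inl y) (.inr l) =
      if x ∈ F l.1 ∨ y ∈ F l.1 then 1 else 2 := by
  simp only [edgeDist_mk, landmarkGraph_dist_inl_inr hF]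
  split_ifs <;> simp_all

lemma landmarkGraph_edgeDist_inl_inr [DecidableEq α] (x : α) {l l' : ι × Bool} (hl : l ≠ l') :
    edgeDist (landmarkGraph F) s(.inl x, .inr l) (.inr l') = if x ∈ F l'.1 then 1 else 2 := by
  have hll' := (landmarkGraph_connected hF).one_lt_dist_of_ne_of_not_adj
    (Sum.inr_injective.ne hl) (landmarkGraph_not_adj_inr_inr F)
  rw [edgeDist_mk, landmarkGraph_dist_inl_inr hF]
  split_ifs <;> omega

theorem isEdgeResolvingSet_landmarkGraph [Fintype α] (hα : 3 ≤ Fintype.card α)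
    (hsep : SeparatesPairs F) :
    IsEdgeResolvingSet (landmarkGraph F) (Set.range Sum.inr) := by
  classical
  have hG := landmarkGraph_connected hF
  intro e he f hf hef
  rcases landmarkGraph_edge_cases F he with ⟨x, y, hxy, rfl⟩ | ⟨x, l, rfl⟩ <;>
    rcases landmarkGraph_edge_cases F hf with ⟨x', y', hxy', rfl⟩ | ⟨x', l', rfl⟩
  · obtain ⟨i, hi⟩ := hsep s(x, y) s(x', y') (by simpa using hxy) (by simpa using hxy')
      (fun h => hef (by simpa using congrArg (Sym2.map (Sum.inl : α → α ⊕ ι × Bool)) h))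
    refine ⟨.inr (i, true), ⟨_, rfl⟩, ?_⟩
    simp only [Sym2.mem_iff, exists_eq_or_imp, exists_eq_left] at hi
    rw [landmarkGraph_edgeDist_inl_inl hF, landmarkGraph_edgeDist_inl_inl hF]
    split_ifs <;> tauto
  · exact ⟨.inr l', ⟨_, rfl⟩, (hG.edgeDist_ne_of_mem_of_notMem (by simp) (by simp)).symm⟩
  · exact ⟨.inr l, ⟨_, rfl⟩, hG.edgeDist_ne_of_mem_of_notMem (by simp) (by simp)⟩
  obtain rfl | hll' := eq_or_ne l l'
  · have hxx' : x ≠ x' := by rintro rfl; exact hef rfl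
    obtain ⟨i, hi⟩ := hsep.exists_not_mem_iff_mem hα hxx'
    have hl : l ≠ (i, !l.2) := fun h => by simpa using congrArg Prod.snd h
    refine ⟨.inr (i, !l.2), ⟨_, rfl⟩, ?_⟩
    rw [landmarkGraph_edgeDist_inl_inr hF x hl, landmarkGraph_edgeDist_inl_inr hF x' hl]
    split_ifs <;> tauto
  · exact ⟨.inr l, ⟨_, rfl⟩, hG.edgeDist_ne_of_mem_of_notMem (by simp) (by simp [hll'])⟩

theorem edgeMetricDim_landmarkGraph_le [Fintype α] [Fintype ι] (hα : 3 ≤ Fintype.card α)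
    (hsep : SeparatesPairs F) : edgeMetricDim (landmarkGraph F) ≤ 2 * Fintype.card ι := by
  calc edgeMetricDim (landmarkGraph F) ≤ #(univ.map .inr) :=
        edgeMetricDim_le_card (by simpa using isEdgeResolvingSet_landmarkGraph hF hα hsep)
    _ = 2 * Fintype.card ι := by simp [mul_comm]

end SimpleGraph

/-- The factor `30` comes from `2 ^ 4 * 7 ^ 30 < 8 ^ 30`, which makes the union bound of
`exists_separatesPairs` work for `2 ^ m` points and `30 * m` sets. -/
theorem exists_connected_edgeMetricDim_le_contains_top {m : ℕ} (hm : 2 ≤ m) :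
    ∃ (V : Type) (_ : Fintype V) (G : SimpleGraph V), G.Connected ∧ edgeMetricDim G ≤ 60 * m ∧
      Contains G (⊤ : SimpleGraph (Fin (2 ^ m))) := by
  have hα : 3 ≤ Fintype.card (Fin (2 ^ m)) := by
    rw [Fintype.card_fin]
    exact (by norm_num : 3 ≤ 2 ^ 2).trans (Nat.pow_le_pow_right two_pos hm)
  have hk : Fintype.card (Fin (2 ^ m)) ^ 4 * 7 ^ (30 * m) < 8 ^ (30 * m) := by
    rw [Fintype.card_fin, ← pow_mul, pow_mul 7, pow_mul 8, mul_comm m 4, pow_mul, ← mul_pow]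
    exact Nat.pow_lt_pow_left (by norm_num) (by omega)
  obtain ⟨F₀, hsep₀⟩ := exists_separatesPairs hα hk
  obtain ⟨F, hsep, hF⟩ := hsep₀.exists_forall_nonempty
  refine ⟨_, inferInstance, landmarkGraph F, landmarkGraph_connected hF, ?_,
    landmarkGraph_contains_top F⟩
  calc edgeMetricDim (landmarkGraph F) ≤ 2 * Fintype.card (Fin (30 * m)) :=
        edgeMetricDim_landmarkGraph_le hF hα hsep
    _ = 60 * m := by rw [Fintype.card_fin]; ring

/-- the maximum possible clique number of a (finite connected) graph of
edge metric dimension at most `k` is `2^(Θ(k))`. -/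
theorem statement11 :
    ∃ (c₁ c₂ : ℝ), 0 < c₁ ∧ 0 < c₂ ∧ ∃ K : ℕ, ∀ k : ℕ, K ≤ k →
      (∀ (V : Type) [Fintype V], ∀ G : SimpleGraph V, G.Connected → edgeMetricDim G ≤ k →
        ∀ n : ℕ, Contains G (⊤ : SimpleGraph (Fin n)) → (n : ℝ) ≤ (2 : ℝ) ^ (c₂ * k)) ∧
      (∃ (V : Type) (_ : Fintype V) (G : SimpleGraph V), G.Connected ∧ edgeMetricDim G ≤ k ∧
        ∃ n : ℕ, (2 : ℝ) ^ (c₁ * k) ≤ (n : ℝ) ∧ Contains G (⊤ : SimpleGraph (Fin n))) := by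
  refine ⟨1 / 120, 1, by norm_num, by norm_num, 120, fun k hk => ⟨?_, ?_⟩⟩
  · intro V _ G hG hdim n ⟨f, hf⟩
    obtain ⟨S, hS, hSdim⟩ := hG.exists_isEdgeResolvingSet_card_eq
    have hchoose : n.choose 2 ≤ 2 ^ k := by
      simpa using (hG.choose_two_le_two_pow_card hS f hf).trans
        (Nat.pow_le_pow_right two_pos (hSdim ▸ hdim))
    have hn : n ≤ 2 ^ k := Nat.le_of_choose_two_le hchoose (le_self_pow₀ one_le_two (by omega))
    rw [one_mul, Real.rpow_natCast]
    exact_mod_cast hn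
  · obtain ⟨V, _, G, hG, hdim, hK⟩ := exists_connected_edgeMetricDim_le_contains_top (m := k / 60)
      (by omega)
    refine ⟨V, inferInstance, G, hG, hdim.trans (by omega), 2 ^ (k / 60), ?_, hK⟩
    have hkm : (k : ℝ) ≤ 120 * (k / 60 : ℕ) := by exact_mod_cast (by omega : k ≤ 120 * (k / 60))
    calc (2 : ℝ) ^ (1 / 120 * (k : ℝ)) ≤ (2 : ℝ) ^ ((k / 60 : ℕ) : ℝ) :=
          Real.rpow_le_rpow_of_exponent_le one_le_two (by linarith)
      _ = (2 ^ (k / 60) : ℕ) := by rw [Real.rpow_natCast]; norm_cast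
end
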